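/- Let K be an algebraically closed field of characteristic 0 and let A be the 3×8 matrix of linear forms in the variables x, y, t over K given by rows [x, y, t, 0, 0, 0, 0, 0], [0, 0, 0, x, y, t, 0, 0], [t, 0, 0, 0, t, 0, x, y]. Then: (i) rank A(p) = 3 for every p ∈ K³ \ {0}; (ii) the 8 columns of A are linearly independent over K; (iii) for every 2-dimensional subspace W ⊆ K³ the space {v ∈ K⁸ : A(w)·v = 0 for all w ∈ W} has dimension exactly 2. (This is the first claim of Example 9: A defines a 1-type uniform Steiner bundle of rank 5 on P² with c₁ = −3 and splitting type (−1³, 0²) on every line.) -/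

import Mathlib

/-!
A relation `∑ⱼ cⱼ ᵥ* A(pⱼ) = 0` among the rows of evaluations of `A` depends only on the tensor
`U = ∑ⱼ cⱼ ⊗ pⱼ`, and it forces `U` to be a multiple of `diag(-1, -1, 1)`. So if `U ≠ 0` the rows
of `U` span `K³`, which is impossible when they lie in the span of fewer than three points `pⱼ`.
Hence, for a single point `p ≠ 0` or for a basis `a, b` of a plane `W`, the stacked evaluations
have independent rows: `A(p)` has rank 3, and the common kernel over `W`, which is the kernel of
the `6 × 8` matrix stacking `A(a)` and `A(b)`, has dimension `8 - 6 = 2`.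
-/

open Matrix

/-- The explicit `3 × 8` matrix of linear forms of Example 9, evaluated at
`(x, y, t) = (p 0, p 1, p 2)`. -/
def A9 {K : Type*} [CommRing K] (p : Fin 3 → K) : Matrix (Fin 3) (Fin 8) K :=
  !![p 0, p 1, p 2, 0, 0, 0, 0, 0;
     0, 0, 0, p 0, p 1, p 2, 0, 0;
     p 2, 0, 0, 0, p 2, 0, p 0, p 1]

namespace Matrix

theorem rank_eq_card_of_vecMul_eq_zero {K m n : Type*} [Field K] [Fintype m] [Fintype n]
    {M : Matrix m n K} (h : ∀ x, x ᵥ* M = 0 → x = 0) : M.rank = Fintype.card m :=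
  (vecMul_injective_iff.mp ((injective_iff_map_eq_zero M.vecMulLinear).mpr h)).rank_matrix

theorem vecMul_of_prod {R ι m n : Type*} [NonUnitalNonAssocSemiring R] [Fintype ι] [Fintype m]
    (M : ι → Matrix m n R) (x : ι × m → R) :
    x ᵥ* of (fun k : ι × m => M k.1 k.2) = ∑ j, (fun i => x (j, i)) ᵥ* M j := by
  ext l
  simp [vecMul, dotProduct, Fintype.sum_prod_type, Finset.sum_apply]

theorem ker_mulVecLin_of_prod {R ι m n : Type*} [CommSemiring R] [Fintype n]
    (M : ι → Matrix m n R) :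
    LinearMap.ker (of fun k : ι × m => M k.1 k.2).mulVecLin =
      ⨅ j, LinearMap.ker (M j).mulVecLin := by
  ext v
  simp [Submodule.mem_iInf, funext_iff, mulVec, dotProduct, Prod.forall]

theorem biInf_span_ker_mulVecLin {R E m n : Type*} [CommSemiring R] [Fintype n] [AddCommMonoid E]
    [Module R E] (F : E →ₗ[R] Matrix m n R) (s : Set E) :
    ⨅ w ∈ Submodule.span R s, LinearMap.ker (F w).mulVecLin =
      ⨅ w ∈ s, LinearMap.ker (F w).mulVecLin := by
  ext v
  simp only [Submodule.mem_iInf, LinearMap.mem_ker, mulVecLin_apply]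
  refine ⟨fun h w hw => h w (Submodule.subset_span hw), fun h w hw => ?_⟩
  induction hw using Submodule.span_induction with
  | mem w hw => exact h w hw
  | zero => simp
  | add w w' _ _ hw hw' => simp [add_mulVec, hw, hw']
  | smul a w _ hw => simp [smul_mulVec, hw]

end Matrix

section CommRing

variable {K : Type*} [CommRing K]

def A9Lin : (Fin 3 → K) →ₗ[K] Matrix (Fin 3) (Fin 8) K where
  toFun := A9
  map_add' p q := by ext i j; fin_cases i <;> fin_cases j <;> simp [A9]
  map_smul' a p := by ext i j; fin_cases i <;> fin_cases j <;> simp [A9]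

def A9Tensor : Matrix (Fin 3) (Fin 3) K →ₗ[K] Fin 8 → K where
  toFun U := ![U 0 0 + U 2 2, U 0 1, U 0 2, U 1 0, U 1 1 + U 2 2, U 1 2, U 2 0, U 2 1]
  map_add' U V := by ext k; fin_cases k <;> simp <;> ring
  map_smul' a U := by ext k; fin_cases k <;> simp <;> ring

theorem vecMul_A9 (c p : Fin 3 → K) :
    c ᵥ* A9 p = A9Tensor (vecMulVec c p) := by
  ext k
  fin_cases k <;> simp [A9, A9Tensor, vecMul, dotProduct, Fin.sum_univ_three, vecMulVec]

end CommRing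

section Field

variable {K : Type*} [Field K]

theorem span_range_eq_top_of_A9Tensor_eq_zero {U : Matrix (Fin 3) (Fin 3) K}
    (hU : A9Tensor U = 0) (hU0 : U ≠ 0) : Submodule.span K (Set.range U) = ⊤ := by
  obtain ⟨h00, h01, h02, h10, h11, h12, h20, h21⟩ : U 0 0 = -U 2 2 ∧ U 0 1 = 0 ∧ U 0 2 = 0 ∧
      U 1 0 = 0 ∧ U 1 1 = -U 2 2 ∧ U 1 2 = 0 ∧ U 2 0 = 0 ∧ U 2 1 = 0 := by
    simpa [A9Tensor, funext_iff, Fin.forall_fin_succ, add_eq_zero_iff_eq_neg] using hU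
  have hdiag : ∀ k, U k k ≠ 0 := by
    have hs : U 2 2 ≠ 0 := fun hs => hU0 <| by
      ext i j; fin_cases i <;> fin_cases j <;> simp [*]
    intro k; fin_cases k <;> simp [*]
  have hrow : ∀ k, U k = Pi.single k (U k k) := by
    intro k; ext j; fin_cases k <;> fin_cases j <;> simp [*]
  rw [eq_top_iff, ← (Pi.basisFun K (Fin 3)).span_eq, Submodule.span_le]
  rintro _ ⟨k, rfl⟩
  have hk : Pi.basisFun K (Fin 3) k = (U k k)⁻¹ • U k := by
    obtain ⟨d, hd0, hd⟩ : ∃ d ≠ 0, U k = Pi.single k d := ⟨U k k, hdiag k, hrow k⟩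
    rw [Pi.basisFun_apply, hd, Pi.single_eq_same, ← Pi.single_smul', smul_eq_mul,
      inv_mul_cancel₀ hd0]
  rw [hk]
  exact Submodule.smul_mem _ _ (Submodule.subset_span ⟨k, rfl⟩)

theorem eq_zero_of_sum_vecMul_A9_eq_zero {ι : Type*} [Fintype ι]
    {p : ι → Fin 3 → K} (hp : LinearIndependent K p) (hι : Fintype.card ι < 3)
    {c : ι → Fin 3 → K} (h : ∑ j, c j ᵥ* A9 (p j) = 0) : c = 0 := by
  set U := ∑ j, vecMulVec (c j) (p j)
  have hrow : ∀ i, U i = ∑ j, c j i • p j := by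
    intro i; ext k; simp [U, Matrix.sum_apply, vecMulVec_apply]
  have hU : U = 0 := by
    by_contra hU0
    have htop := span_range_eq_top_of_A9Tensor_eq_zero (by simpa [U, vecMul_A9] using h) hU0
    have hle : Submodule.span K (Set.range U) ≤ Submodule.span K (Set.range p) := by
      rw [Submodule.span_le]
      rintro _ ⟨i, rfl⟩
      rw [hrow]
      exact Submodule.sum_mem _ fun j _ => Submodule.smul_mem _ _ (Submodule.subset_span ⟨j, rfl⟩)
    have hcard := finrank_range_le_card (R := K) p
    rw [htop, top_le_iff] at hle
    rw [Set.finrank, hle, finrank_top, Module.finrank_fin_fun] at hcard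
    omega
  ext j i
  exact Fintype.linearIndependent_iff.mp hp (fun j => c j i) (by rw [← hrow, hU]; rfl) j

theorem rank_A9 {p : Fin 3 → K} (hp : p ≠ 0) : (A9 p).rank = 3 := by
  refine (rank_eq_card_of_vecMul_eq_zero fun c hc => ?_).trans (Fintype.card_fin 3)
  exact congrFun (eq_zero_of_sum_vecMul_A9_eq_zero (p := fun _ : Unit => p)
    (linearIndependent_unique_iff.mpr hp) (by simp) (c := fun _ => c) (by simpa using hc)) ()

theorem eq_zero_of_forall_A9_mulVec_eq_zero {v : Fin 8 → K} (hv : ∀ p, A9 p *ᵥ v = 0) :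
    v = 0 := by
  have h0 := hv ![1, 0, 0]
  have h1 := hv ![0, 1, 0]
  have h2 := hv ![0, 0, 1]
  ext i
  fin_cases i <;> simp_all [A9, dotProduct, Fin.sum_univ_eight, funext_iff, Fin.forall_fin_succ]

theorem finrank_biInf_ker_A9 {W : Submodule K (Fin 3 → K)} (hW : Module.finrank K W = 2) :
    Module.finrank K (⨅ w ∈ W, LinearMap.ker (A9 w).mulVecLin : Submodule K (Fin 8 → K)) = 2 := by
  let b := Module.finBasisOfFinrankEq K W hW
  let p : Fin 2 → Fin 3 → K := fun j => b j
  have hspan : Submodule.span K (Set.range p) = W :=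
    (Submodule.span_range_subtype_eq_top_iff W _).mp b.span_eq
  have hp : LinearIndependent K p := b.linearIndependent.map' W.subtype W.ker_subtype
  let M := of fun k : Fin 2 × Fin 3 => A9 (p k.1) k.2
  have hker : ⨅ w ∈ W, LinearMap.ker (A9 w).mulVecLin = LinearMap.ker M.mulVecLin := by
    rw [← hspan]
    exact (biInf_span_ker_mulVecLin A9Lin _).trans (iInf_range.trans (ker_mulVecLin_of_prod _).symm)
  have hrank : M.rank = 6 := rank_eq_card_of_vecMul_eq_zero fun x hx => by
    have hx0 := eq_zero_of_sum_vecMul_A9_eq_zero hp (by simp) (c := fun j i => x (j, i))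
      (by rwa [← vecMul_of_prod])
    ext ⟨j, i⟩
    exact congrFun (congrFun hx0 j) i
  have hnullity := M.mulVecLin.finrank_range_add_finrank_ker
  rw [← Matrix.rank, hrank, Module.finrank_fin_fun] at hnullity
  rw [hker]
  omega

end Field

theorem stmt9_general {K : Type*} [Field K] :
    (∀ p : Fin 3 → K, p ≠ 0 → (A9 p).rank = 3) ∧
    (∀ v : Fin 8 → K, (∀ p : Fin 3 → K, (A9 p).mulVec v = 0) → v = 0) ∧
    (∀ W : Submodule K (Fin 3 → K), Module.finrank K W = 2 →
      Module.finrank K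
        (⨅ w ∈ W, LinearMap.ker (A9 w).mulVecLin : Submodule K (Fin 8 → K)) = 2) :=
  ⟨fun _ => rank_A9, fun _ => eq_zero_of_forall_A9_mulVec_eq_zero, fun _ => finrank_biInf_ker_A9⟩

/-- **Example 9 (first claim).** The explicit `3 × 8` matrix `A` with rows
`[x, y, t, 0, 0, 0, 0, 0]`, `[0, 0, 0, x, y, t, 0, 0]`, `[t, 0, 0, 0, t, 0, x, y]`
defines a 1-type uniform Steiner bundle of rank 5 on P² with `c₁ = −3`:
(i) `A(p)` has rank 3 for every `p ≠ 0`; (ii) the 8 columns of `A` are linearly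
independent over `K`; (iii) for every 2-dimensional subspace `W ⊆ K³` the common
kernel of the evaluations `A(w)`, `w ∈ W`, has dimension exactly 2
(splitting type `(−1³, 0²)` on every line). -/
theorem stmt9 {K : Type*} [Field K] [IsAlgClosed K] [CharZero K] :
    (∀ p : Fin 3 → K, p ≠ 0 → (A9 p).rank = 3) ∧
    (∀ v : Fin 8 → K, (∀ p : Fin 3 → K, (A9 p).mulVec v = 0) → v = 0) ∧
    (∀ W : Submodule K (Fin 3 → K), Module.finrank K W = 2 →
      Module.finrank K
        (⨅ w ∈ W, LinearMap.ker (A9 w).mulVecLin : Submodule K (Fin 8 → K)) = 2) :=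
  stmt9_general
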